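/- In an SGF-quantale, for every prime p of Q_e and every partial unit f with d(f) ≰ p, there exists a unique prime q of Q_e such that r(f) ≰ q and p·f = f·q. -/
import Mathlib


/-- A unital involutive quantale. The multiplicative unit `1` plays the role of `e`. -/
class UIQuantale (Q : Type*) extends CompleteLattice Q, Monoid Q, StarMul Q where
  mul_sSup : ∀ (a : Q) (s : Set Q), a * sSup s = ⨆ b ∈ s, a * b
  sSup_mul : ∀ (a : Q) (s : Set Q), sSup s * a = ⨆ b ∈ s, b * a
  star_sSup : ∀ (s : Set Q), star (sSup s) = ⨆ b ∈ s, star b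

/-- A partial unit: both `f` and `star f` are functional. -/
def IsPU {Q : Type*} [UIQuantale Q] (f : Q) : Prop :=
  star f * f ≤ 1 ∧ f * star f ≤ 1

/-- A prime element of `Q_e`. -/
def IsPrimeE {Q : Type*} [UIQuantale Q] (p : Q) : Prop :=
  p ≤ 1 ∧ p ≠ 1 ∧ ∀ h k : Q, h ≤ 1 → k ≤ 1 → h ⊓ k ≤ p → h ≤ p ∨ k ≤ p

/-- An SGF-quantale: a unital involutive quantale which is join-generated by its
partial units (SGF1), satisfies `f = f f* f` for partial units (SGF2), and the
separation axiom SGF3. -/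
class SGFQuantale (Q : Type*) extends UIQuantale Q where
  sgf1 : ∀ a : Q, a = sSup {f | IsPU f ∧ f ≤ a}
  sgf2 : ∀ f : Q, IsPU f → f * star f * f = f
  sgf3 : ∀ f g h : Q, IsPU f → IsPU g → h ≤ 1 → f ≤ h * ⊤ ⊔ g → f ≤ h * f ⊔ g

/-- The incidence relation: `f` and `g` are incident at `p` if some `h ≤ d(f) ⊓ d(g)`
with `h ≰ p` satisfies `h f ≤ p f ⊔ g`. -/
def Incident {Q : Type*} [SGFQuantale Q] (p f g : Q) : Prop :=
  ∃ h : Q, h ≤ (f * star f) ⊓ (g * star g) ∧ ¬ h ≤ p ∧ h * f ≤ p * f ⊔ g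

section MyHelpers

variable {Q : Type*}

section UIQ
variable [UIQuantale Q]

instance UIQuantale.covL : CovariantClass Q Q (· * ·) (· ≤ ·) := by
  constructor
  intro c a b h
  have hs : sSup ({a, b} : Set Q) = b := by rw [sSup_pair, sup_eq_right.mpr h]
  have hm := UIQuantale.mul_sSup c ({a, b} : Set Q)
  rw [hs] at hm
  show c * a ≤ c * b
  rw [hm]
  exact le_biSup _ (Set.mem_insert a {b})

instance UIQuantale.covR : CovariantClass Q Q (Function.swap (· * ·)) (· ≤ ·) := by
  constructor
  intro c a b h
  have hs : sSup ({a, b} : Set Q) = b := by rw [sSup_pair, sup_eq_right.mpr h]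
  have hm := UIQuantale.sSup_mul c ({a, b} : Set Q)
  rw [hs] at hm
  show a * c ≤ b * c
  rw [hm]
  exact le_biSup (fun x => x * c) (Set.mem_insert a {b})

lemma sMono {a b : Q} (h : a ≤ b) : star a ≤ star b := by
  have hs : sSup ({a, b} : Set Q) = b := by rw [sSup_pair, sup_eq_right.mpr h]
  have hm := UIQuantale.star_sSup ({a, b} : Set Q)
  rw [hs] at hm
  rw [hm]
  exact le_biSup _ (Set.mem_insert a {b})

lemma myMulSSupMul (f g : Q) (S : Set Q) : f * sSup S * g = ⨆ v ∈ S, f * v * g := by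
  rw [UIQuantale.mul_sSup, ← sSup_image, UIQuantale.sSup_mul, iSup_image]

end UIQ

section SGF
variable [SGFQuantale Q]

lemma myIsPU_bot : IsPU (⊥ : Q) := by
  have h1 : (⊥ : Q) * star (⊥ : Q) = ⊥ := by
    have := UIQuantale.sSup_mul (star (⊥ : Q)) (∅ : Set Q)
    simpa using this
  have h2 : star (⊥ : Q) * (⊥ : Q) = ⊥ := by
    have := UIQuantale.mul_sSup (star (⊥ : Q)) (∅ : Set Q)
    simpa using this
  exact ⟨by rw [h2]; exact bot_le, by rw [h1]; exact bot_le⟩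

lemma myLeMulSelf {u x : Q} (hu : u ≤ 1) (hxu : x ≤ u * ⊤) : x ≤ u * x := by
  conv_lhs => rw [SGFQuantale.sgf1 x]
  refine sSup_le ?_
  rintro g ⟨hg, hgx⟩
  have h3 := SGFQuantale.sgf3 g ⊥ u hg myIsPU_bot hu
    (by rw [sup_bot_eq]; exact hgx.trans hxu)
  rw [sup_bot_eq] at h3
  exact h3.trans (mul_le_mul_right hgx u)

lemma myLeSelfMul {u x : Q} (hx : x ≤ 1) (hu : u ≤ 1) (hus : star u = u) (hxu : x ≤ u) :
    x ≤ x * u := by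
  have hut : star x ≤ u * ⊤ := by
    calc star x ≤ star u := sMono hxu
      _ = u := hus
      _ = u * 1 := (mul_one u).symm
      _ ≤ u * ⊤ := mul_le_mul_right le_top u
  have h2 : star x ≤ u * star x := myLeMulSelf hu hut
  calc x = star (star x) := (star_star x).symm
    _ ≤ star (u * star x) := sMono h2
    _ = x * u := by rw [star_mul, star_star, hus]

lemma mySandwich {u x : Q} (hx1 : x ≤ 1) (hu1 : u ≤ 1) (hus : star u = u) (hxu : x ≤ u) :
    x ≤ u * x * u := by
  have hut : x ≤ u * ⊤ :=
    hxu.trans (le_trans (le_of_eq (mul_one u).symm) (mul_le_mul_right le_top u))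
  have h1 : x ≤ u * x := myLeMulSelf hu1 hut
  have h2 : x ≤ x * u := myLeSelfMul hx1 hu1 hus hxu
  calc x ≤ u * x := h1
    _ ≤ u * (x * u) := mul_le_mul_right h2 u
    _ = u * x * u := (mul_assoc u x u).symm

end SGF

end MyHelpers

/-- For every prime `p` of `Q_e` and every partial unit `f` with `d(f) ≰ p`, there is
a unique prime `q` with `r(f) ≰ q` and `p f = f q`. -/

theorem stmt12 (Q : Type*) [SGFQuantale Q] (p f : Q)
    (hp : IsPrimeE p) (hf : IsPU f) (hd : ¬ f * star f ≤ p) :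
    ∃! q : Q, IsPrimeE q ∧ ¬ star f * f ≤ q ∧ p * f = f * q := by
  obtain ⟨hp1, hpne, hppr⟩ := hp
  obtain ⟨hf1, hf2⟩ := hf
  have sgf2f : f * star f * f = f := SGFQuantale.sgf2 f ⟨hf1, hf2⟩
  have hus : star (f * star f) = f * star f := by rw [star_mul, star_star]
  have hrs : star (star f * f) = star f * f := by rw [star_mul, star_star]
  set S : Set Q := {v | v ≤ 1 ∧ f * v * star f ≤ p} with hS
  have hq1 : sSup S ≤ 1 := sSup_le fun v hv => hv.1
  have hfqf : f * sSup S * star f ≤ p := by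
    rw [myMulSSupMul]
    exact iSup₂_le fun v hv => hv.2
  -- q ≠ 1
  have hqne : sSup S ≠ 1 := by
    intro h
    apply hd
    have h1 : f * (1 : Q) * star f ≤ p := by rw [← h]; exact hfqf
    rwa [mul_one] at h1
  -- primality
  have hqpr : ∀ h k : Q, h ≤ 1 → k ≤ 1 → h ⊓ k ≤ sSup S → h ≤ sSup S ∨ k ≤ sSup S := by
    intro h k hh hk hhk
    have hau : f * h * star f ≤ f * star f := by
      calc f * h * star f ≤ f * 1 * star f := by gcongr
        _ = f * star f := by rw [mul_one]
    have hbu : f * k * star f ≤ f * star f := by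
      calc f * k * star f ≤ f * 1 * star f := by gcongr
        _ = f * star f := by rw [mul_one]
    have ha1 : f * h * star f ≤ 1 := hau.trans hf2
    have hb1 : f * k * star f ≤ 1 := hbu.trans hf2
    have hxu : (f * h * star f) ⊓ (f * k * star f) ≤ f * star f := inf_le_left.trans hau
    have hx1 : (f * h * star f) ⊓ (f * k * star f) ≤ 1 := hxu.trans hf2
    have hxs := mySandwich hx1 hf2 hus hxu
    have hfxh : star f * ((f * h * star f) ⊓ (f * k * star f)) * f ≤ h := by
      calc star f * ((f * h * star f) ⊓ (f * k * star f)) * f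
          ≤ star f * (f * h * star f) * f := by gcongr; exact inf_le_left
        _ = (star f * f) * h * (star f * f) := by simp only [mul_assoc]
        _ ≤ 1 * h * 1 := by gcongr
        _ = h := by rw [one_mul, mul_one]
    have hfxk : star f * ((f * h * star f) ⊓ (f * k * star f)) * f ≤ k := by
      calc star f * ((f * h * star f) ⊓ (f * k * star f)) * f
          ≤ star f * (f * k * star f) * f := by gcongr; exact inf_le_right
        _ = (star f * f) * k * (star f * f) := by simp only [mul_assoc]
        _ ≤ 1 * k * 1 := by gcongr
        _ = k := by rw [one_mul, mul_one]
    have hfx : star f * ((f * h * star f) ⊓ (f * k * star f)) * f ≤ sSup S :=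
      (le_inf hfxh hfxk).trans hhk
    have hxp : (f * h * star f) ⊓ (f * k * star f) ≤ p := by
      calc (f * h * star f) ⊓ (f * k * star f)
          ≤ (f * star f) * ((f * h * star f) ⊓ (f * k * star f)) * (f * star f) := hxs
        _ = f * (star f * ((f * h * star f) ⊓ (f * k * star f)) * f) * star f := by
            simp only [mul_assoc]
        _ ≤ f * sSup S * star f := by gcongr
        _ ≤ p := hfqf
    rcases hppr _ _ ha1 hb1 hxp with hc | hc
    · exact Or.inl (le_sSup ⟨hh, hc⟩)
    · exact Or.inr (le_sSup ⟨hk, hc⟩)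
  -- r(f) ≰ q
  have hqr : ¬ star f * f ≤ sSup S := by
    intro hc
    apply hd
    have h1 : f * (star f * f) * star f ≤ p := by
      calc f * (star f * f) * star f ≤ f * sSup S * star f := by gcongr
        _ ≤ p := hfqf
    have heqd : f * (star f * f) * star f = f * star f := by rw [← mul_assoc, sgf2f]
    rwa [heqd] at h1
  -- p f = f q
  have hle1 : f * sSup S ≤ p * f := by
    rw [UIQuantale.mul_sSup]
    refine iSup₂_le fun v hv => ?_
    obtain ⟨hv1, hv2⟩ := hv
    have hw1 : star f * f * v ≤ v := by
      calc star f * f * v ≤ 1 * v := by gcongr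
        _ = v := one_mul v
    have hwr : star f * f * v ≤ star f * f := by
      calc star f * f * v ≤ star f * f * 1 := by gcongr
        _ = star f * f := mul_one _
    have hw0 : star f * f * v ≤ 1 := hw1.trans hv1
    have hws := mySandwich hw0 hf1 hrs hwr
    have hkey : star f * f * v ≤ star f * p * f := by
      calc star f * f * v
          ≤ (star f * f) * (star f * f * v) * (star f * f) := hws
        _ = star f * (f * (star f * f * v) * star f) * f := by simp only [mul_assoc]
        _ ≤ star f * (f * v * star f) * f := by gcongr
        _ ≤ star f * p * f := by gcongr
    have hfv : f * v = f * (star f * f * v) := by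
      conv_lhs => rw [← sgf2f]
      simp only [mul_assoc]
    calc f * v = f * (star f * f * v) := hfv
      _ ≤ f * (star f * p * f) := by gcongr
      _ = (f * star f) * p * f := by simp only [mul_assoc]
      _ ≤ 1 * p * f := by gcongr
      _ = p * f := by rw [one_mul]
  have hle2 : p * f ≤ f * sSup S := by
    have hm1 : p * (f * star f) ≤ 1 := by
      calc p * (f * star f) ≤ 1 * 1 := by gcongr
        _ = 1 := one_mul 1
    have hmp : p * (f * star f) ≤ p := by
      calc p * (f * star f) ≤ p * 1 := by gcongr
        _ = p := mul_one p
    have hmu : p * (f * star f) ≤ f * star f := by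
      calc p * (f * star f) ≤ 1 * (f * star f) := by gcongr
        _ = f * star f := one_mul _
    have hut : p * (f * star f) ≤ (f * star f) * ⊤ :=
      hmu.trans (le_trans (le_of_eq (mul_one _).symm) (mul_le_mul_right le_top _))
    have hmm : p * (f * star f) ≤ (f * star f) * (p * (f * star f)) := myLeMulSelf hf2 hut
    have hv0mem : star f * (p * (f * star f)) * f ∈ S := by
      constructor
      · calc star f * (p * (f * star f)) * f ≤ star f * 1 * f := by gcongr
          _ = star f * f := by rw [mul_one]
          _ ≤ 1 := hf1
      · calc f * (star f * (p * (f * star f)) * f) * star f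
            = (f * star f) * (p * (f * star f)) * (f * star f) := by simp only [mul_assoc]
          _ ≤ 1 * (p * (f * star f)) * 1 := by gcongr
          _ = p * (f * star f) := by rw [one_mul, mul_one]
          _ ≤ p := hmp
    have hpf : p * f = (p * (f * star f)) * f := by
      conv_lhs => rw [← sgf2f]
      simp only [mul_assoc]
    calc p * f = (p * (f * star f)) * f := hpf
      _ ≤ ((f * star f) * (p * (f * star f))) * f := mul_le_mul_left hmm f
      _ = f * (star f * (p * (f * star f)) * f) := by simp only [mul_assoc]
      _ ≤ f * sSup S := mul_le_mul_right (le_sSup hv0mem) f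
  refine ⟨sSup S, ⟨⟨hq1, hqne, hqpr⟩, hqr, le_antisymm hle2 hle1⟩, ?_⟩
  -- uniqueness
  rintro q' ⟨⟨hq'1, hq'ne, hq'pr⟩, hq'r, hq'eq⟩
  apply le_antisymm
  · -- q' ≤ sSup S
    apply le_sSup
    refine ⟨hq'1, ?_⟩
    calc f * q' * star f = (p * f) * star f := by rw [← hq'eq]
      _ = p * (f * star f) := mul_assoc p f (star f)
      _ ≤ p * 1 := by gcongr
      _ = p := mul_one p
  · refine sSup_le fun v hv => ?_
    obtain ⟨hv1, hv2⟩ := hv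
    have hw1 : v ⊓ (star f * f) ≤ 1 := inf_le_right.trans hf1
    have hwr : v ⊓ (star f * f) ≤ star f * f := inf_le_right
    have hws := mySandwich hw1 hf1 hrs hwr
    have hwq' : v ⊓ (star f * f) ≤ q' := by
      calc v ⊓ (star f * f)
          ≤ (star f * f) * (v ⊓ (star f * f)) * (star f * f) := hws
        _ = star f * (f * (v ⊓ (star f * f)) * star f) * f := by simp only [mul_assoc]
        _ ≤ star f * (f * v * star f) * f := by gcongr; exact inf_le_left
        _ ≤ star f * p * f := by gcongr
        _ = star f * (p * f) := mul_assoc _ p f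
        _ = star f * (f * q') := by rw [hq'eq]
        _ = (star f * f) * q' := (mul_assoc _ f q').symm
        _ ≤ 1 * q' := by gcongr
        _ = q' := one_mul q'
    rcases hq'pr v (star f * f) hv1 hf1 hwq' with h | h
    · exact h
    · exact absurd h hq'r
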